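/- A graph G without isolated vertices is quasi-regularizable (|S| ≤ |N(S)| for every independent set S) if and only if ker(G) = ∅, where ker(G) is the intersection of all critical independent sets. -/

import Mathlib

open Finset

open scoped Classical

variable {V : Type*}

/-- The neighborhood `N(X)` of a set of vertices `X`. -/
noncomputable def nbhd [Fintype V] (G : SimpleGraph V) (X : Finset V) : Finset V :=
  Finset.univ.filter (fun v => ∃ x ∈ X, G.Adj v x)

/-- The difference `d(X) = |X| - |N(X)|`. -/
noncomputable def diffd [Fintype V] (G : SimpleGraph V) (X : Finset V) : ℤ :=
  (X.card : ℤ) - ((nbhd G X).card : ℤ)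

/-- The critical difference `d_c(G) = max{d(X) : X ⊆ V}`. -/
noncomputable def critDiff [Fintype V] (G : SimpleGraph V) : ℤ :=
  Finset.univ.powerset.sup' ⟨∅, Finset.empty_mem_powerset _⟩ (diffd G)

/-- A set of vertices is independent if no two of its vertices are adjacent. -/
def IsIndep [Fintype V] (G : SimpleGraph V) (A : Finset V) : Prop :=
  ∀ a ∈ A, ∀ b ∈ A, ¬ G.Adj a b

/-- A critical independent set: independent with `d(A) = d_c(G)`. -/
def IsCritIndep [Fintype V] (G : SimpleGraph V) (A : Finset V) : Prop :=
  IsIndep G A ∧ diffd G A = critDiff G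

/-- The independence number `α(G)`. -/
noncomputable def indepNum [Fintype V] (G : SimpleGraph V) : ℕ :=
  (Finset.univ.powerset.filter (fun A => IsIndep G A)).sup Finset.card

/-- The independence number of the induced subgraph `G[X]`,
realized as the largest independent set contained in `X`. -/
noncomputable def indepNumOn [Fintype V] (G : SimpleGraph V) (X : Finset V) : ℕ :=
  (X.powerset.filter (fun A => IsIndep G A)).sup Finset.card

/-- A matching: a set of edges of `G`, pairwise vertex-disjoint. -/
def IsMatchingSet [Fintype V] (G : SimpleGraph V) (M : Finset (Sym2 V)) : Prop :=
  (∀ e ∈ M, e ∈ G.edgeSet) ∧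
  (∀ e ∈ M, ∀ f ∈ M, e ≠ f → ∀ v : V, v ∈ e → v ∉ f)

/-- The matching number `μ(G)`. -/
noncomputable def matchNum [Fintype V] (G : SimpleGraph V) : ℕ :=
  ((Finset.univ : Finset (Sym2 V)).powerset.filter (fun M => IsMatchingSet G M)).sup Finset.card

/-- The matching number of the induced subgraph `G[X]`, realized as the
largest matching of `G` all of whose edges have both endpoints in `X`. -/
noncomputable def matchNumOn [Fintype V] (G : SimpleGraph V) (X : Finset V) : ℕ :=
  ((Finset.univ : Finset (Sym2 V)).powerset.filter
    (fun M => IsMatchingSet G M ∧ ∀ e ∈ M, ∀ v ∈ e, v ∈ X)).sup Finset.card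

/-- `ker(G)`: the intersection of all critical independent sets. -/
noncomputable def kerG [Fintype V] (G : SimpleGraph V) : Finset V :=
  Finset.univ.filter (fun v => ∀ A : Finset V, IsCritIndep G A → v ∈ A)

/-- A maximum independent set, i.e. a member of `Ω(G)`. -/
def IsMaxIndep [Fintype V] (G : SimpleGraph V) (S : Finset V) : Prop :=
  IsIndep G S ∧ S.card = indepNum G

/-- `core(G)`: the intersection of all maximum independent sets. -/
noncomputable def coreG [Fintype V] (G : SimpleGraph V) : Finset V :=
  Finset.univ.filter (fun v => ∀ S : Finset V, IsMaxIndep G S → v ∈ S)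

/-- `corona(G)`: the union of all maximum independent sets. -/
noncomputable def coronaG [Fintype V] (G : SimpleGraph V) : Finset V :=
  Finset.univ.filter (fun v => ∃ S : Finset V, IsMaxIndep G S ∧ v ∈ S)

/-- `G` has no isolated vertices. -/
def NoIsolated (G : SimpleGraph V) : Prop := ∀ v : V, ∃ w, G.Adj v w

section AuxLemmas

variable [Fintype V] (G : SimpleGraph V)

lemma nbhd_mono {X Y : Finset V} (h : X ⊆ Y) : nbhd G X ⊆ nbhd G Y := by
  intro v hv
  simp only [nbhd, mem_filter, mem_univ, true_and] at hv ⊢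
  obtain ⟨x, hx, hadj⟩ := hv
  exact ⟨x, h hx, hadj⟩

lemma diffd_empty : diffd G ∅ = 0 := by
  have : nbhd G ∅ = ∅ := by
    ext v; simp [nbhd]
  simp [diffd, this]

lemma diffd_le_critDiff (X : Finset V) : diffd G X ≤ critDiff G :=
  Finset.le_sup' _ (Finset.mem_powerset.mpr (Finset.subset_univ X))

lemma critDiff_nonneg : 0 ≤ critDiff G := by
  have := diffd_le_critDiff G ∅
  rwa [diffd_empty] at this

lemma indep_sdiff_nbhd (X : Finset V) : IsIndep G (X \ nbhd G X) := by
  intro a ha b hb hadj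
  rw [Finset.mem_sdiff] at ha hb
  apply ha.2
  simp only [nbhd, mem_filter, mem_univ, true_and]
  exact ⟨b, hb.1, hadj⟩

lemma key_ineq (X : Finset V) : diffd G X ≤ diffd G (X \ nbhd G X) := by
  set N := nbhd G X with hN
  set I := X \ N with hI
  -- card of I
  have hIcard : ((I : Finset V).card : ℤ) = (X.card : ℤ) - ((X ∩ N).card : ℤ) := by
    rw [hI, ← Finset.sdiff_inter_self_left X N]
    exact Finset.cast_card_sdiff (Finset.inter_subset_left)
  -- nbhd of I is inside N \ X
  have hsub : nbhd G I ⊆ N \ X := by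
    intro w hw
    simp only [nbhd, mem_filter, mem_univ, true_and] at hw
    obtain ⟨i, hi, hadj⟩ := hw
    rw [hI, Finset.mem_sdiff] at hi
    rw [Finset.mem_sdiff]
    constructor
    · rw [hN]
      simp only [nbhd, mem_filter, mem_univ, true_and]
      exact ⟨i, hi.1, hadj⟩
    · intro hwX
      apply hi.2
      rw [hN]
      simp only [nbhd, mem_filter, mem_univ, true_and]
      exact ⟨w, hwX, hadj.symm⟩
  have hNI : ((nbhd G I).card : ℤ) ≤ (N.card : ℤ) - ((X ∩ N).card : ℤ) := by
    have h1 : (nbhd G I).card ≤ (N \ X).card := Finset.card_le_card hsub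
    have h2 : ((N \ X).card : ℤ) = (N.card : ℤ) - ((N ∩ X).card : ℤ) := by
      rw [← Finset.sdiff_inter_self_left N X]
      exact Finset.cast_card_sdiff (Finset.inter_subset_left)
    have h3 : (N ∩ X).card = (X ∩ N).card := by rw [Finset.inter_comm]
    have h1' : ((nbhd G I).card : ℤ) ≤ ((N \ X).card : ℤ) := by exact_mod_cast h1
    rw [h2, h3] at h1'
    exact h1'
  simp only [diffd]
  rw [hIcard]
  have : ((nbhd G X).card : ℤ) = (N.card : ℤ) := by rw [hN]
  rw [this]
  linarith

lemma critIndep_inter {A B : Finset V} (hA : IsCritIndep G A) (hB : IsCritIndep G B) :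
    IsCritIndep G (A ∩ B) := by
  constructor
  · intro a ha b hb
    exact hA.1 a (Finset.mem_of_mem_inter_left ha) b (Finset.mem_of_mem_inter_left hb)
  · -- submodularity of diffd
    have hcard : ((A ∪ B).card : ℤ) + ((A ∩ B).card : ℤ) = (A.card : ℤ) + (B.card : ℤ) := by
      exact_mod_cast congrArg (fun n : ℕ => (n : ℤ)) (Finset.card_union_add_card_inter A B)
    have hNunion : nbhd G (A ∪ B) = nbhd G A ∪ nbhd G B := by
      ext v
      simp only [nbhd, mem_filter, mem_univ, true_and, Finset.mem_union]
      constructor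
      · rintro ⟨x, h | h, hadj⟩
        · exact Or.inl ⟨x, h, hadj⟩
        · exact Or.inr ⟨x, h, hadj⟩
      · rintro (⟨x, hx, hadj⟩ | ⟨x, hx, hadj⟩)
        · exact ⟨x, Or.inl hx, hadj⟩
        · exact ⟨x, Or.inr hx, hadj⟩
    have hNinter : nbhd G (A ∩ B) ⊆ nbhd G A ∩ nbhd G B :=
      Finset.subset_inter (nbhd_mono G Finset.inter_subset_left)
        (nbhd_mono G Finset.inter_subset_right)
    have hNcard : ((nbhd G (A ∪ B)).card : ℤ) + ((nbhd G (A ∩ B)).card : ℤ)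
        ≤ ((nbhd G A).card : ℤ) + ((nbhd G B).card : ℤ) := by
      have h1 : (nbhd G (A ∩ B)).card ≤ (nbhd G A ∩ nbhd G B).card :=
        Finset.card_le_card hNinter
      have h2 : (nbhd G A ∪ nbhd G B).card + (nbhd G A ∩ nbhd G B).card
          = (nbhd G A).card + (nbhd G B).card := Finset.card_union_add_card_inter _ _
      rw [hNunion]
      have h2' : ((nbhd G A ∪ nbhd G B).card : ℤ) + ((nbhd G A ∩ nbhd G B).card : ℤ)
          = ((nbhd G A).card : ℤ) + ((nbhd G B).card : ℤ) := by exact_mod_cast h2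
      have h1' : ((nbhd G (A ∩ B)).card : ℤ) ≤ ((nbhd G A ∩ nbhd G B).card : ℤ) := by
        exact_mod_cast h1
      linarith
    have hsubmod : diffd G A + diffd G B ≤ diffd G (A ∪ B) + diffd G (A ∩ B) := by
      simp only [diffd]
      linarith
    have hU := diffd_le_critDiff G (A ∪ B)
    have hInt := diffd_le_critDiff G (A ∩ B)
    have hdA := hA.2
    have hdB := hB.2
    linarith

lemma exists_critIndep : ∃ A : Finset V, IsCritIndep G A := by
  obtain ⟨X, _, hXe⟩ :=
    Finset.exists_mem_eq_sup' (⟨∅, Finset.empty_mem_powerset _⟩ :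
      (Finset.univ.powerset : Finset (Finset V)).Nonempty) (diffd G)
  refine ⟨X \ nbhd G X, indep_sdiff_nbhd G X, le_antisymm (diffd_le_critDiff G _) ?_⟩
  calc critDiff G = diffd G X := hXe
    _ ≤ diffd G (X \ nbhd G X) := key_ineq G X

lemma critIndep_inf' {s : Finset (Finset V)} (hs : s.Nonempty)
    (h : ∀ A ∈ s, IsCritIndep G A) : IsCritIndep G (s.inf' hs id) := by
  induction hs using Finset.Nonempty.cons_induction with
  | singleton A => simpa using h A (Finset.mem_singleton_self A)
  | cons A s hA hs ih =>
    rw [Finset.inf'_cons]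
    exact critIndep_inter G (h A (Finset.mem_cons_self A s))
      (ih (fun B hB => h B (Finset.mem_cons_of_mem hB)))
    exact hs

lemma kerG_critIndep : IsCritIndep G (kerG G) := by
  classical
  obtain ⟨A0, hA0⟩ := exists_critIndep G
  set s : Finset (Finset V) := Finset.univ.filter (fun A => IsCritIndep G A) with hsdef
  have hA0s : A0 ∈ s := by simp [hsdef, hA0]
  have hs : s.Nonempty := ⟨A0, hA0s⟩
  have hmem : ∀ A ∈ s, IsCritIndep G A := by
    intro A hAs
    simp only [hsdef, Finset.mem_filter] at hAs
    exact hAs.2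
  have hker : kerG G = s.inf' hs id := by
    ext v
    simp only [kerG, mem_filter, mem_univ, true_and]
    constructor
    · intro hv
      have : ∀ A ∈ s, ({v} : Finset V) ≤ (id A : Finset V) := by
        intro A hAs
        simpa using hv A (hmem A hAs)
      have := Finset.le_inf' hs id this
      simpa using this.trans (le_refl _)
    · intro hv A hAcrit
      have hAs : A ∈ s := by simp [hsdef, hAcrit]
      exact (Finset.inf'_le id hAs : s.inf' hs id ≤ A) hv
  rw [hker]
  exact critIndep_inf' G hs hmem

end AuxLemmas

/-- `G` (without isolated vertices) is quasi-regularizable iff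
`ker(G) = ∅`. -/
theorem stmt_17 {V : Type*} [Fintype V] (G : SimpleGraph V) (hiso : NoIsolated G) :
    (∀ S : Finset V, IsIndep G S → S.card ≤ (nbhd G S).card) ↔ kerG G = ∅ := by
  constructor
  · -- quasi-regularizable → ker = ∅
    intro hq
    have hcrit0 : critDiff G = 0 := by
      refine le_antisymm ?_ (critDiff_nonneg G)
      apply Finset.sup'_le
      intro X _
      have h1 := key_ineq G X
      have h2 := hq (X \ nbhd G X) (indep_sdiff_nbhd G X)
      have h2' : diffd G (X \ nbhd G X) ≤ 0 := by
        simp only [diffd]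
        have : ((X \ nbhd G X).card : ℤ) ≤ ((nbhd G (X \ nbhd G X)).card : ℤ) := by
          exact_mod_cast h2
        linarith
      linarith
    have hemptyCrit : IsCritIndep G (∅ : Finset V) := by
      refine ⟨fun a ha => absurd ha (Finset.notMem_empty a), ?_⟩
      rw [diffd_empty, hcrit0]
    ext v
    simp only [kerG, mem_filter, mem_univ, true_and, Finset.notMem_empty, iff_false]
    intro hv
    exact absurd (hv ∅ hemptyCrit) (Finset.notMem_empty v)
  · -- ker = ∅ → quasi-regularizable
    intro hker S hS
    have hkc := kerG_critIndep G
    rw [hker] at hkc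
    have hcrit0 : critDiff G = 0 := by
      rw [← hkc.2, diffd_empty]
    have := diffd_le_critDiff G S
    rw [hcrit0] at this
    simp only [diffd] at this
    exact_mod_cast (by linarith : (S.card : ℤ) ≤ ((nbhd G S).card : ℤ))
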